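/- arXiv:1109.1529 — 3 statements merged into one kernel-verified Lean document; each statement's English description precedes it below -/
import Mathlib

section
/- The map σ satisfies the braid equation: (σ ⊗ id_V) ∘ (id_V ⊗ σ) ∘ (σ ⊗ id_V) = (id_V ⊗ σ) ∘ (σ ⊗ id_V) ∘ (id_V ⊗ σ) as linear maps on V ⊗ V ⊗ V. -/
/-!
In the reordered basis `(ω₋, ω_z, ω₊)` the braiding sends `ω_i ⊗ ω_j` to `γ i j • ω_j ⊗ ω_i`, plus
`(1 - q²) • ω_i ⊗ ω_j` when `i < j`, where `γ i i = 1` and `γ i j * γ j i = q²` for `i ≠ j`.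
Every braiding of this Hecke shape over a totally ordered basis, with `q²` replaced by any
scalar `t`, satisfies the braid equation: on `ω_i ⊗ ω_j ⊗ ω_k` both sides only depend on the
relative order of `i, j, k`, and in each case their coefficients agree because
`γ i j * γ j i = t`.
-/

open TensorProduct

noncomputable section

/-- The 3-dimensional complex vector space with basis `ω 0 = ω₋`, `ω 1 = ω₊`, `ω 2 = ω_z`. -/
abbrev V : Type := Fin 3 → ℂ

/-- The distinguished basis `(ω₋, ω₊, ω_z)` of `V`. -/
def ω : Fin 3 → V := fun i => Pi.basisFun ℂ (Fin 3) i

/-- The basis `ω_a ⊗ ω_b` of `V ⊗ V`. -/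
def basisVV : Module.Basis (Fin 3 × Fin 3) ℂ (V ⊗[ℂ] V) :=
  (Pi.basisFun ℂ (Fin 3)).tensorProduct (Pi.basisFun ℂ (Fin 3))

/-- The values of the braiding `σ` on the basis vectors `ω_a ⊗ ω_b`
(first index `0 = −`, `1 = +`, `2 = z`). -/
def σval (q : ℝ) : Fin 3 → Fin 3 → V ⊗[ℂ] V :=
  ![![ω 0 ⊗ₜ[ℂ] ω 0,
     (1 - (q : ℂ) ^ 2) • (ω 0 ⊗ₜ[ℂ] ω 1) + ((q : ℂ) ^ 2)⁻¹ • (ω 1 ⊗ₜ[ℂ] ω 0),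
     (1 - (q : ℂ) ^ 2) • (ω 0 ⊗ₜ[ℂ] ω 2) + ((q : ℂ) ^ 4)⁻¹ • (ω 2 ⊗ₜ[ℂ] ω 0)],
    ![(q : ℂ) ^ 4 • (ω 0 ⊗ₜ[ℂ] ω 1),
      ω 1 ⊗ₜ[ℂ] ω 1,
      (q : ℂ) ^ 6 • (ω 2 ⊗ₜ[ℂ] ω 1)],
    ![(q : ℂ) ^ 6 • (ω 0 ⊗ₜ[ℂ] ω 2),
      (1 - (q : ℂ) ^ 2) • (ω 2 ⊗ₜ[ℂ] ω 1) + ((q : ℂ) ^ 4)⁻¹ • (ω 1 ⊗ₜ[ℂ] ω 2),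
      ω 2 ⊗ₜ[ℂ] ω 2]]

/-- The braiding `σ` of Woronowicz's 3d left covariant calculus on `SU_q(2)`. -/
def σmap (q : ℝ) : (V ⊗[ℂ] V) →ₗ[ℂ] (V ⊗[ℂ] V) :=
  basisVV.constr ℂ (fun p => σval q p.1 p.2)

/-- `σ₁ = σ ⊗ id` acting on the first two tensor slots of `V ⊗ V ⊗ V`. -/
def σ₁ (q : ℝ) : (V ⊗[ℂ] (V ⊗[ℂ] V)) →ₗ[ℂ] (V ⊗[ℂ] (V ⊗[ℂ] V)) :=
  (TensorProduct.assoc ℂ V V V).toLinearMap ∘ₗ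
    (TensorProduct.map (σmap q) LinearMap.id) ∘ₗ
      (TensorProduct.assoc ℂ V V V).symm.toLinearMap

/-- `σ₂ = id ⊗ σ` acting on the last two tensor slots of `V ⊗ V ⊗ V`. -/
def σ₂ (q : ℝ) : (V ⊗[ℂ] (V ⊗[ℂ] V)) →ₗ[ℂ] (V ⊗[ℂ] (V ⊗[ℂ] V)) :=
  TensorProduct.map LinearMap.id (σmap q)

section HeckeBraiding

variable {R ι M : Type*} [CommRing R] [LinearOrder ι] [AddCommGroup M] [Module R M]

def SatisfiesBraidEquation (σ : M ⊗[R] M →ₗ[R] M ⊗[R] M) : Prop :=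
  (TensorProduct.assoc R M M M).conj (σ.rTensor M) ∘ₗ σ.lTensor M ∘ₗ
      (TensorProduct.assoc R M M M).conj (σ.rTensor M) =
    σ.lTensor M ∘ₗ (TensorProduct.assoc R M M M).conj (σ.rTensor M) ∘ₗ σ.lTensor M

def heckeBraiding (b : Module.Basis ι R M) (t : R) (γ : ι → ι → R) :
    M ⊗[R] M →ₗ[R] M ⊗[R] M :=
  (b.tensorProduct b).constr R fun p =>
    (if p.1 < p.2 then (1 - t) • (b p.1 ⊗ₜ b p.2) else 0) + γ p.1 p.2 • (b p.2 ⊗ₜ b p.1)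

variable (b : Module.Basis ι R M) {t : R} {γ : ι → ι → R}

theorem heckeBraiding_tmul (i j : ι) :
    heckeBraiding b t γ (b i ⊗ₜ b j) =
      (if i < j then (1 - t) • (b i ⊗ₜ b j) else 0) + γ i j • (b j ⊗ₜ b i) := by
  conv_lhs => rw [← Module.Basis.tensorProduct_apply, heckeBraiding, Module.Basis.constr_basis]

theorem heckeBraiding_satisfiesBraidEquation (hdiag : ∀ i, γ i i = 1)
    (hprod : ∀ i j, i < j → γ i j * γ j i = t) :
    SatisfiesBraidEquation (heckeBraiding b t γ) := by
  refine (b.tensorProduct (b.tensorProduct b)).ext ?_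
  rintro ⟨i, j, k⟩
  simp only [Module.Basis.tensorProduct_apply, LinearMap.comp_apply,
    LinearEquiv.conj_apply_apply, assoc_symm_tmul, LinearMap.rTensor_tmul, LinearMap.lTensor_tmul]
  -- Each relative order of `i, j, k` is one comparison of coefficients of rearranged basis tensors.
  rcases lt_trichotomy i j with hij | hij | hij <;>
  rcases lt_trichotomy j k with hjk | hjk | hjk <;>
  rcases lt_trichotomy i k with hik | hik | hik <;>
  (try (exfalso; order)) <;>
  subst_vars <;>
  simp only [heckeBraiding_tmul, lt_irrefl, not_lt_of_gt, *, if_true, if_false, zero_add,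
      one_smul, tmul_add, add_tmul, ← smul_tmul', tmul_smul, map_add, map_smul, assoc_tmul,
      LinearMap.rTensor_tmul, LinearMap.lTensor_tmul, assoc_symm_tmul] <;>
  match_scalars <;> grind

end HeckeBraiding

theorem σmap_tmul (q : ℝ) (a b : Fin 3) : σmap q (ω a ⊗ₜ ω b) = σval q a b := by
  rw [show ω a ⊗ₜ[ℂ] ω b = basisVV (a, b) by simp [basisVV, ω]]
  exact basisVV.constr_basis ℂ _ (a, b)

-- In this order of the basis, `σ` has the Hecke shape with `t = q²`.
def ωOrdered : Module.Basis (Fin 3) ℂ V := (Pi.basisFun ℂ (Fin 3)).reindex (Equiv.swap 1 2)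

theorem ωOrdered_apply (i : Fin 3) : ωOrdered i = ω (Equiv.swap 1 2 i) := by
  simp [ωOrdered, ω]

-- Indexed along `ωOrdered`: `0 = −`, `1 = z`, `2 = +`.
def woronowiczCoeff (q : ℝ) : Fin 3 → Fin 3 → ℂ :=
  ![![1, ((q : ℂ) ^ 4)⁻¹, ((q : ℂ) ^ 2)⁻¹],
    ![(q : ℂ) ^ 6, 1, ((q : ℂ) ^ 4)⁻¹],
    ![(q : ℂ) ^ 4, (q : ℂ) ^ 6, 1]]

theorem woronowiczCoeff_self (q : ℝ) (i : Fin 3) : woronowiczCoeff q i i = 1 := by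
  fin_cases i <;> rfl

theorem woronowiczCoeff_mul_of_lt {q : ℝ} (hq : q ≠ 0) (i j : Fin 3) (hij : i < j) :
    woronowiczCoeff q i j * woronowiczCoeff q j i = (q : ℂ) ^ 2 := by
  have : (q : ℂ) ≠ 0 := Complex.ofReal_ne_zero.mpr hq
  fin_cases i <;> fin_cases j <;> simp [woronowiczCoeff] at hij ⊢ <;> field_simp

theorem σmap_eq_heckeBraiding (q : ℝ) :
    σmap q = heckeBraiding ωOrdered ((q : ℂ) ^ 2) (woronowiczCoeff q) := by
  refine (ωOrdered.tensorProduct ωOrdered).ext ?_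
  rintro ⟨i, j⟩
  rw [Module.Basis.tensorProduct_apply, heckeBraiding_tmul]
  fin_cases i <;> fin_cases j <;>
    simp [ωOrdered_apply, σmap_tmul, σval, woronowiczCoeff, Equiv.swap_apply_of_ne_of_ne]

theorem braid_equation_general (q : ℝ) (hq0 : 0 < q) :
    σ₁ q ∘ₗ σ₂ q ∘ₗ σ₁ q = σ₂ q ∘ₗ σ₁ q ∘ₗ σ₂ q := by
  have h := heckeBraiding_satisfiesBraidEquation ωOrdered (woronowiczCoeff_self q)
    (woronowiczCoeff_mul_of_lt hq0.ne')
  rwa [← σmap_eq_heckeBraiding] at h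

/-- the braiding `σ` satisfies the braid equation
`(σ⊗id) ∘ (id⊗σ) ∘ (σ⊗id) = (id⊗σ) ∘ (σ⊗id) ∘ (id⊗σ)` on `V ⊗ V ⊗ V`. -/
theorem braid_equation (q : ℝ) (hq0 : 0 < q) (hq1 : q < 1) :
    σ₁ q ∘ₗ σ₂ q ∘ₗ σ₁ q = σ₂ q ∘ₗ σ₁ q ∘ₗ σ₂ q :=
  braid_equation_general q hq0

end
end

section
/- The range of the order-2 braided antisymmetriser A⁽²⁾ := id_{V⊗V} − σ has dimension 3 (the classical dimension 3!/(2!·1!) of the space of 2-forms). -/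
open TensorProduct

noncomputable section

/-- The order-2 braided antisymmetriser `A⁽²⁾ = id − σ`. -/
def A2 (q : ℝ) : (V ⊗[ℂ] V) →ₗ[ℂ] (V ⊗[ℂ] V) := LinearMap.id - σmap q

/-!
`σ` fixes each `ω_a ⊗ ω_a` and preserves each plane spanned by `ω_a ⊗ ω_b` and `ω_b ⊗ ω_a`
(`a ≠ b`). On such a plane `id − σ` has rank one: if `σ (ω_b ⊗ ω_a) = q^k ω_a ⊗ ω_b`, then
`A⁽²⁾ (ω_a ⊗ ω_b)` is a nonzero multiple of `A⁽²⁾ (ω_b ⊗ ω_a) = ω_b ⊗ ω_a − q^k ω_a ⊗ ω_b`.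
The three vectors `A⁽²⁾ (ω_b ⊗ ω_a)`, one per plane, thus span the range; they are independent
because their `ω_b ⊗ ω_a`-coordinates form the identity matrix.
-/

theorem Module.Basis.linearIndependent_of_repr_eq_single {ι κ R M : Type*} [Finite ι]
    [DecidableEq ι] [Ring R] [AddCommGroup M] [Module R M] (b : Module.Basis κ R M) (e : ι → κ)
    {v : ι → M} (hv : ∀ i j, b.repr (v i) (e j) = (Pi.single i 1 : ι → R) j) :
    LinearIndependent R v := by
  let f : M →ₗ[R] ι → R := LinearMap.pi fun j => Finsupp.lapply (e j) ∘ₗ b.repr.toLinearMap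
  have hf : f ∘ v = Pi.basisFun R ι := by
    ext i j
    simp [f, hv]
  exact .of_comp f (hf ▸ (Pi.basisFun R ι).linearIndependent)

lemma basisVV_apply (p : Fin 3 × Fin 3) : basisVV p = ω p.1 ⊗ₜ[ℂ] ω p.2 := by
  simp [basisVV, ω, Module.Basis.tensorProduct_apply']

lemma A2_basisVV (q : ℝ) (p : Fin 3 × Fin 3) :
    A2 q (basisVV p) = basisVV p - σval q p.1 p.2 := by
  simp [A2, σmap]

lemma A2_basisVV_diag (q : ℝ) (a : Fin 3) : A2 q (basisVV (a, a)) = 0 := by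
  rw [A2_basisVV, basisVV_apply]
  fin_cases a <;> simp [σval]

/-- The pairs `(+, −), (z, −), (+, z)`, on which `σ` acts by a power of `q` times the swap. -/
def twoFormIndex : Fin 3 → Fin 3 × Fin 3 := ![(1, 0), (2, 0), (1, 2)]

def twoForm (q : ℝ) : Fin 3 → V ⊗[ℂ] V := fun i => A2 q (basisVV (twoFormIndex i))

lemma twoForm_eq (q : ℝ) :
    twoForm q = ![basisVV (1, 0) - (q : ℂ) ^ 4 • basisVV (0, 1),
      basisVV (2, 0) - (q : ℂ) ^ 6 • basisVV (0, 2),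
      basisVV (1, 2) - (q : ℂ) ^ 6 • basisVV (2, 1)] := by
  ext1 i
  fin_cases i <;> simp only [twoForm, twoFormIndex, A2_basisVV] <;> simp [σval, basisVV_apply]

lemma basisVV_repr_twoForm (q : ℝ) (i j : Fin 3) :
    basisVV.repr (twoForm q i) (twoFormIndex j) = (Pi.single i 1 : Fin 3 → ℂ) j := by
  rw [twoForm_eq]
  fin_cases i <;> fin_cases j <;> simp [twoFormIndex]

lemma A2_basisVV_swap {q : ℝ} (hq : q ≠ 0) (i : Fin 3) :
    A2 q (basisVV (twoFormIndex i).swap) =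
      -(![(q : ℂ) ^ 2, (q : ℂ) ^ 4, (q : ℂ) ^ 4] i)⁻¹ • twoForm q i := by
  have hqC : (q : ℂ) ≠ 0 := by exact_mod_cast hq
  rw [twoForm_eq]
  fin_cases i <;> simp only [twoFormIndex, A2_basisVV] <;> simp [σval, basisVV_apply] <;>
    match_scalars <;> field_simp <;> ring

lemma A2_basisVV_mem_span {q : ℝ} (hq : q ≠ 0) (p : Fin 3 × Fin 3) :
    A2 q (basisVV p) ∈ Submodule.span ℂ (Set.range (twoForm q)) := by
  set W := Submodule.span ℂ (Set.range (twoForm q))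
  have hgen (i : Fin 3) : twoForm q i ∈ W := Submodule.subset_span ⟨i, rfl⟩
  have hswap (i : Fin 3) : A2 q (basisVV (twoFormIndex i).swap) ∈ W :=
    A2_basisVV_swap hq i ▸ W.smul_mem _ (hgen i)
  have hdiag (a : Fin 3) : A2 q (basisVV (a, a)) ∈ W := A2_basisVV_diag q a ▸ W.zero_mem
  obtain ⟨a, b⟩ := p
  fin_cases a <;> fin_cases b
  exacts [hdiag 0, hswap 0, hswap 1, hgen 0, hdiag 1, hgen 2, hgen 1, hswap 2, hdiag 2]

lemma range_A2 {q : ℝ} (hq : q ≠ 0) :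
    LinearMap.range (A2 q) = Submodule.span ℂ (Set.range (twoForm q)) := by
  rw [← basisVV.constr_self ℂ (A2 q), Module.Basis.constr_range]
  refine le_antisymm (Submodule.span_le.2 (Set.range_subset_iff.2 (A2_basisVV_mem_span hq))) ?_
  exact Submodule.span_mono (Set.range_comp_subset_range twoFormIndex (A2 q ∘ basisVV))

lemma linearIndependent_twoForm (q : ℝ) : LinearIndependent ℂ (twoForm q) :=
  basisVV.linearIndependent_of_repr_eq_single twoFormIndex (basisVV_repr_twoForm q)

theorem A2_rank_general (q : ℝ) (hq0 : 0 < q) :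
    Module.finrank ℂ (LinearMap.range (A2 q)) = 3 := by
  rw [range_A2 hq0.ne', finrank_span_eq_card (linearIndependent_twoForm q), Fintype.card_fin]

/-- the range of `A⁽²⁾ = id − σ` has dimension `3 = 3!/(2!·1!)`. -/
theorem A2_rank (q : ℝ) (hq0 : 0 < q) (hq1 : q < 1) :
    Module.finrank ℂ (LinearMap.range (A2 q)) = 3 :=
  A2_rank_general q hq0

end
end

section
/- Classical symmetry criterion: the bilinear form g is symmetric on W (i.e. g(φ, φ′) = g(φ′, φ) for all φ, φ′ ∈ W) if and only if T(T(φ)) = (−1)^{N−1} · T(T(1)) · φ for all φ ∈ Λ¹W = W, where T(T(1)) ∈ Λ⁰W = ℂ is a scalar. -/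
noncomputable section

/-- The `N`-dimensional complex vector space `W` with basis `(ω¹, …, ω^N)`. -/
abbrev W (N : ℕ) : Type := Fin N → ℂ

/-- The distinguished basis `(ω¹, …, ω^N)` of `W`. -/
def e (N : ℕ) : Fin N → W N := fun i => Pi.basisFun ℂ (Fin N) i

/-- The full exterior algebra `ΛW`. -/
abbrev E (N : ℕ) : Type := ExteriorAlgebra ℂ (W N)

/-- The `k`-th exterior power `ΛᵏW`, as a submodule of `ΛW`. -/
def degE (N k : ℕ) : Submodule ℂ (E N) :=
  (LinearMap.range (ExteriorAlgebra.ι ℂ : W N →ₗ[ℂ] E N)) ^ k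

/-- The basis monomial `ω^{a 0} ∧ ⋯ ∧ ω^{a (k-1)} ∈ ΛᵏW`. -/
def mono (N : ℕ) {k : ℕ} (a : Fin k → Fin N) : E N :=
  (List.ofFn fun j => ExteriorAlgebra.ι ℂ (e N (a j))).prod

/-- `HodgeData N g G st m T` packages the classical data: a nondegenerate bilinear form
`g` on `W`, its extensions `G k` to the exterior powers `ΛᵏW` (via the permutation-sum
formula), the antilinear involution `st` of `ΛW` fixing every basis monomial, the volume
form `μ = m ω¹∧⋯∧ω^N`, and the operator `T` defined by
`φ* ∧ T(φ′) = (1/k!) G k (φ*, φ′) μ`, sending `ΛᵏW` into `Λ^{N−k}W`. -/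
structure HodgeData (N : ℕ) (g : W N →ₗ[ℂ] W N →ₗ[ℂ] ℂ)
    (G : ℕ → (E N →ₗ[ℂ] E N →ₗ[ℂ] ℂ)) (st : E N →ₛₗ[starRingEnd ℂ] E N)
    (m : ℂ) (T : E N →ₗ[ℂ] E N) : Prop where
  nondeg : LinearMap.BilinForm.Nondegenerate g
  m_ne : m ≠ 0
  hG : ∀ (k : ℕ) (a b : Fin k → Fin N),
    G k (mono N a) (mono N b) =
      ∑ π : Equiv.Perm (Fin k), ∑ π' : Equiv.Perm (Fin k),
        (((Equiv.Perm.sign π : ℤ) * (Equiv.Perm.sign π' : ℤ) : ℤ) : ℂ) *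
          ∏ j : Fin k, g (e N (a (π j))) (e N (b (π' j)))
  hst : ∀ (k : ℕ) (a : Fin k → Fin N), st (mono N a) = mono N a
  hTdeg : ∀ k : ℕ, ∀ φ ∈ degE N k, T φ ∈ degE N (N - k)
  hTdef : ∀ k : ℕ, ∀ φ ∈ degE N k, ∀ φ' ∈ degE N k,
    st φ * T φ' =
      (((k.factorial : ℂ))⁻¹ * G k (st φ) φ') • (m • mono N (fun j : Fin N => j))

/-!
Let `A` be the Gram matrix of `g` in the basis `ω`, let `vol = ω¹ ∧ ⋯ ∧ ω^N` with `N = n + 1`,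
and let `ω̂_c` be `vol` with `ω^c` left out. Wedging `Λ¹W` against `Λⁿ W` is a perfect pairing
in the bases `ω^a`, `ω̂_c` (indices from `0`), so the defining identity of `T` computes it:
`T 1 = m vol`, `T vol = m det A`, `T (ι w) = m ∑_c (-1)^c (A w)_c ω̂_c` and
`T ω̂_c = (-1)^(n+c) m ι (row c of adj A)`. Hence `T ∘ T = (-1)^n m² adj(Aᵀ) A` on `Λ¹W` and
`T (T 1) = m² det A`, so the criterion says `adj(Aᵀ) A = det A • 1 = adj(Aᵀ) Aᵀ`. Since `A` is
invertible by nondegeneracy, this is `A = Aᵀ`.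
-/

open ExteriorAlgebra Matrix

theorem Matrix.sum_perm_perm_sign_mul_prod_eq_factorial_mul_det {R ι : Type*} [CommRing R]
    [Fintype ι] [DecidableEq ι] (A : Matrix ι ι R) :
    ∑ π : Equiv.Perm ι, ∑ π' : Equiv.Perm ι,
      (((Equiv.Perm.sign π : ℤ) * (Equiv.Perm.sign π' : ℤ) : ℤ) : R) * ∏ j, A (π j) (π' j) =
      (Fintype.card ι).factorial * A.det := by
  have inner (π : Equiv.Perm ι) : ∑ π' : Equiv.Perm ι,
      (((Equiv.Perm.sign π : ℤ) * (Equiv.Perm.sign π' : ℤ) : ℤ) : R) * ∏ j, A (π j) (π' j) =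
      A.det := by
    rw [det_apply']
    refine Fintype.sum_equiv ((Equiv.inv _).trans (Equiv.mulLeft π)) _ _ fun π' => ?_
    simp only [Equiv.trans_apply, Equiv.inv_apply, Equiv.coe_mulLeft, Equiv.Perm.sign_mul,
      Equiv.Perm.sign_inv, Units.val_mul, Int.cast_mul, Equiv.Perm.coe_mul, Function.comp_apply]
    conv_rhs => rw [← Equiv.prod_comp π']
    simp
  simp only [inner, Finset.sum_const, Finset.card_univ, Fintype.card_perm, nsmul_eq_mul]

theorem Matrix.adjugate_transpose_mul_eq_det_smul_one_iff {R ι : Type*} [CommRing R] [Fintype ι]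
    [DecidableEq ι] {A : Matrix ι ι R} (hA : IsUnit A.det) :
    Aᵀ.adjugate * A = A.det • 1 ↔ Aᵀ = A := by
  have hadj : IsUnit Aᵀ.adjugate :=
    (isUnit_iff_isUnit_det _).mpr (by rw [det_adjugate, det_transpose]; exact hA.pow _)
  rw [← det_transpose A, ← adjugate_mul, hadj.mul_right_inj, eq_comm]

section Monomials

variable (N : ℕ)

def topMono : E N := mono N (fun j : Fin N => j)

def omitMono (n : ℕ) (c : Fin (n + 1)) : E (n + 1) := mono (n + 1) c.succAbove

theorem mono_eq_ιMulti {k : ℕ} (a : Fin k → Fin N) :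
    mono N a = ιMulti ℂ k (fun j => e N (a j)) :=
  (ιMulti_apply _).symm

theorem mono_mem_degE {k : ℕ} (a : Fin k → Fin N) : mono N a ∈ degE N k := by
  rw [mono_eq_ιMulti]
  exact ιMulti_range ℂ k (Set.mem_range_self _)

theorem mono_of_fin_zero (a : Fin 0 → Fin N) : mono N a = 1 := by
  simp [mono]

theorem mono_of_fin_one (a : Fin 1 → Fin N) : mono N a = ι ℂ (e N (a 0)) := by
  simp [mono]

theorem mono_cons {k : ℕ} (a : Fin N) (as : Fin k → Fin N) :
    mono N (Fin.cons a as) = ι ℂ (e N a) * mono N as := by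
  simp only [mono, List.ofFn_succ, List.prod_cons, Fin.cons_zero, Fin.cons_succ]

theorem mono_snoc {k : ℕ} (as : Fin k → Fin N) (a : Fin N) :
    mono N (Fin.snoc as a) = mono N as * ι ℂ (e N a) := by
  simp only [mono, List.ofFn_succ', List.concat_eq_append, List.prod_append, List.prod_cons,
    List.prod_nil, Fin.snoc_castSucc, Fin.snoc_last, mul_one]

theorem mono_eq_zero_of_not_injective {k : ℕ} {a : Fin k → Fin N}
    (ha : ¬ Function.Injective a) : mono N a = 0 := by
  rw [mono_eq_ιMulti]
  exact AlternatingMap.map_eq_zero_of_not_injective _ _ fun h => ha h.of_comp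

theorem mono_comp_perm {k : ℕ} (a : Fin k → Fin N) (σ : Equiv.Perm (Fin k)) :
    mono N (a ∘ σ) = ((Equiv.Perm.sign σ : ℤ) : ℂ) • mono N a := by
  rw [mono_eq_ιMulti, mono_eq_ιMulti,
    show (fun j => e N ((a ∘ σ) j)) = (fun j => e N (a j)) ∘ σ from rfl,
    AlternatingMap.map_perm, Units.smul_def, Int.cast_smul_eq_zsmul]

theorem topMono_ne_zero : topMono N ≠ 0 := by
  intro h
  have h0 : (exteriorPower.ιMulti ℂ N (e N) : ⋀[ℂ]^N (W N)) = 0 :=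
    Subtype.ext (by simpa [topMono, mono_eq_ιMulti] using h)
  have hdet := congrArg (exteriorPower.alternatingMapLinearEquiv
    (Matrix.detRowAlternating : W N [⋀^Fin N]→ₗ[ℂ] ℂ)) h0
  have hid : Matrix.of (e N) = 1 := by
    ext i j
    simp [e, Matrix.one_apply, Pi.single_apply, eq_comm]
  rw [exteriorPower.alternatingMapLinearEquiv_apply_ιMulti, map_zero] at hdet
  change (Matrix.of (e N)).det = 0 at hdet
  simp [hid] at hdet

theorem ι_eq_sum_smul_ι_e (v : W N) : ι ℂ v = ∑ b, v b • ι ℂ (e N b) := by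
  simp_rw [← map_smul, ← map_sum]
  congr 1
  simpa [e] using ((Pi.basisFun ℂ (Fin N)).sum_repr v).symm

theorem degE_le_span_mono (k : ℕ) :
    degE N k ≤ Submodule.span ℂ (Set.range (mono N (k := k))) := by
  change ⋀[ℂ]^k (W N) ≤ _
  rw [← exteriorPower.ιMulti_span_fixedDegree_of_span_eq_top ℂ k (W N)
    (Pi.basisFun ℂ (Fin N)).span_eq, Submodule.span_le]
  rintro - ⟨v, hv, rfl⟩
  obtain ⟨a, rfl⟩ := Set.range_subset_range_iff_exists_comp.mp hv
  exact Submodule.subset_span ⟨a, mono_eq_ιMulti N a⟩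

end Monomials

section OmitMono

variable {n : ℕ}

theorem cons_succAbove_eq_cycleRange_symm (c : Fin (n + 1)) :
    (Fin.cons c c.succAbove : Fin (n + 1) → Fin (n + 1)) = (Fin.cycleRange c).symm := by
  funext j
  cases j using Fin.cases <;> simp [Fin.cycleRange_symm_zero, Fin.cycleRange_symm_succ]

theorem snoc_succAbove_eq_cons_comp_finRotate (c : Fin (n + 1)) :
    (Fin.snoc c.succAbove c : Fin (n + 1) → Fin (n + 1)) =
      Fin.cons c c.succAbove ∘ finRotate (n + 1) := by
  funext j
  cases j using Fin.lastCases <;> simp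

theorem ι_e_mul_omitMono (a c : Fin (n + 1)) :
    ι ℂ (e (n + 1) a) * omitMono n c =
      if a = c then ((-1 : ℂ) ^ (c : ℕ)) • topMono (n + 1) else 0 := by
  rw [omitMono, ← mono_cons]
  split_ifs with h
  · rw [h, cons_succAbove_eq_cycleRange_symm, ← Function.id_comp ⇑(Fin.cycleRange c).symm,
      mono_comp_perm, Equiv.Perm.sign_symm, Fin.sign_cycleRange]
    simp [topMono, Function.id_def]
  · exact mono_eq_zero_of_not_injective _
      (by simpa [Fin.cons_injective_iff, Fin.succAbove_right_injective] using h)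

theorem omitMono_mul_ι_e (c b : Fin (n + 1)) :
    omitMono n c * ι ℂ (e (n + 1) b) =
      if b = c then ((-1 : ℂ) ^ (n + c : ℕ)) • topMono (n + 1) else 0 := by
  rw [omitMono, ← mono_snoc]
  split_ifs with h
  · rw [h, snoc_succAbove_eq_cons_comp_finRotate, mono_comp_perm,
      cons_succAbove_eq_cycleRange_symm, ← Function.id_comp ⇑(Fin.cycleRange c).symm,
      mono_comp_perm, smul_smul, Equiv.Perm.sign_symm, Fin.sign_cycleRange, sign_finRotate]
    simp [topMono, Function.id_def, pow_add]
  · exact mono_eq_zero_of_not_injective _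
      (by simpa [Fin.snoc_injective_iff, Fin.succAbove_right_injective] using h)

theorem mono_mem_span_omitMono (a : Fin n → Fin (n + 1)) :
    mono (n + 1) a ∈ Submodule.span ℂ (Set.range (omitMono n)) := by
  by_cases ha : Function.Injective a
  · obtain ⟨c, hc⟩ : ∃ c, c ∉ Set.range a := by
      by_contra! h
      simpa using Fintype.card_le_of_surjective a h
    obtain ⟨f, rfl⟩ : ∃ f, a = c.succAbove ∘ f := Set.range_subset_range_iff_exists_comp.mp
      (by rw [Fin.range_succAbove]; exact fun x hx hxc => hc (hxc ▸ hx))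
    have hf := Finite.injective_iff_bijective.mp ha.of_comp
    rw [show c.succAbove ∘ f = c.succAbove ∘ Equiv.ofBijective f hf from rfl, mono_comp_perm]
    exact Submodule.smul_mem _ _ (Submodule.subset_span ⟨c, rfl⟩)
  · rw [mono_eq_zero_of_not_injective _ ha]
    exact zero_mem _

theorem degE_le_span_omitMono : degE (n + 1) n ≤ Submodule.span ℂ (Set.range (omitMono n)) :=
  (degE_le_span_mono _ n).trans <| Submodule.span_le.mpr <| by
    rintro - ⟨a, rfl⟩
    exact mono_mem_span_omitMono a

theorem ι_e_mul_sum_omitMono (a : Fin (n + 1)) (μ : Fin (n + 1) → ℂ) :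
    ι ℂ (e (n + 1) a) * ∑ c, μ c • omitMono n c =
      ((-1 : ℂ) ^ (a : ℕ) * μ a) • topMono (n + 1) := by
  simp [Finset.mul_sum, ι_e_mul_omitMono, smul_smul, mul_comm]

theorem omitMono_mul_ι (c : Fin (n + 1)) (v : W (n + 1)) :
    omitMono n c * ι ℂ v = ((-1 : ℂ) ^ (n + c : ℕ) * v c) • topMono (n + 1) := by
  rw [ι_eq_sum_smul_ι_e, Finset.mul_sum]
  simp [omitMono_mul_ι_e, smul_smul, mul_comm]

theorem eq_sum_omitMono_of_ι_e_mul {x : E (n + 1)} (hx : x ∈ degE (n + 1) n)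
    {μ : Fin (n + 1) → ℂ}
    (h : ∀ a, ι ℂ (e (n + 1) a) * x = ((-1 : ℂ) ^ (a : ℕ) * μ a) • topMono (n + 1)) :
    x = ∑ c, μ c • omitMono n c := by
  obtain ⟨ν, rfl⟩ := (Submodule.mem_span_range_iff_exists_fun ℂ).mp (degE_le_span_omitMono hx)
  refine Finset.sum_congr rfl fun c _ => ?_
  have hc := h c
  rw [ι_e_mul_sum_omitMono] at hc
  rw [mul_left_cancel₀ (pow_ne_zero _ (neg_ne_zero.mpr one_ne_zero))
    (smul_left_injective ℂ (topMono_ne_zero _) hc)]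

theorem eq_ι_of_omitMono_mul {x : E (n + 1)} (hx : x ∈ degE (n + 1) 1) {w : W (n + 1)}
    (h : ∀ b, omitMono n b * x = ((-1 : ℂ) ^ (n + b : ℕ) * w b) • topMono (n + 1)) :
    x = ι ℂ w := by
  obtain ⟨v, rfl⟩ : ∃ v, ι ℂ v = x := by simpa [degE] using hx
  congr 1
  funext b
  have hb := h b
  rw [omitMono_mul_ι] at hb
  exact mul_left_cancel₀ (pow_ne_zero _ (neg_ne_zero.mpr one_ne_zero))
    (smul_left_injective ℂ (topMono_ne_zero _) hb)

end OmitMono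

section Gram

variable {N : ℕ}

def gram (g : W N →ₗ[ℂ] W N →ₗ[ℂ] ℂ) : Matrix (Fin N) (Fin N) ℂ :=
  LinearMap.BilinForm.toMatrix (Pi.basisFun ℂ (Fin N)) g

theorem gram_apply (g : W N →ₗ[ℂ] W N →ₗ[ℂ] ℂ) (i j : Fin N) :
    gram g i j = g (e N i) (e N j) :=
  LinearMap.BilinForm.toMatrix_apply _ _ _ _

theorem transpose_gram_eq_iff (g : W N →ₗ[ℂ] W N →ₗ[ℂ] ℂ) :
    (gram g)ᵀ = gram g ↔ ∀ v w, g v w = g w v :=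
  (LinearMap.BilinForm.isSymm_toMatrix_iff_isSymm _).trans LinearMap.BilinForm.isSymm_def

theorem isUnit_det_gram {g : W N →ₗ[ℂ] W N →ₗ[ℂ] ℂ} (hg : LinearMap.BilinForm.Nondegenerate g) :
    IsUnit (gram g).det :=
  isUnit_iff_ne_zero.mpr ((LinearMap.BilinForm.nondegenerate_iff_det_ne_zero _).mp hg)

end Gram

namespace HodgeData

section

variable {N : ℕ} {g : W N →ₗ[ℂ] W N →ₗ[ℂ] ℂ} {G : ℕ → (E N →ₗ[ℂ] E N →ₗ[ℂ] ℂ)}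
  {st : E N →ₛₗ[starRingEnd ℂ] E N} {m : ℂ} {T : E N →ₗ[ℂ] E N}

theorem mono_mul_T (H : HodgeData N g G st m T) {k : ℕ} (a b : Fin k → Fin N) :
    mono N a * T (mono N b) = (m * ((gram g).submatrix a b).det) • topMono N := by
  have h := H.hTdef k _ (mono_mem_degE N a) _ (mono_mem_degE N b)
  have hdet := Matrix.sum_perm_perm_sign_mul_prod_eq_factorial_mul_det ((gram g).submatrix a b)
  simp only [submatrix_apply, gram_apply, Fintype.card_fin] at hdet
  rwa [H.hst, H.hG, hdet, inv_mul_cancel_left₀ (Nat.cast_ne_zero.mpr k.factorial_ne_zero),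
    smul_smul, mul_comm] at h

theorem T_one (H : HodgeData N g G st m T) : T 1 = m • topMono N := by
  simpa [mono_of_fin_zero] using H.mono_mul_T Fin.elim0 Fin.elim0

theorem T_topMono (H : HodgeData N g G st m T) : T (topMono N) = (m * (gram g).det) • 1 := by
  obtain ⟨c, hc⟩ : ∃ c, algebraMap ℂ (E N) c = T (topMono N) := by
    simpa [degE, Submodule.mem_one] using H.hTdeg N (topMono N) (mono_mem_degE N _)
  have h := H.mono_mul_T (fun j => j) (fun j => j)
  rw [← topMono, ← hc, ← Algebra.commutes, ← Algebra.smul_def] at h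
  rw [← hc, smul_left_injective ℂ (topMono_ne_zero N) h, Algebra.algebraMap_eq_smul_one]
  rfl

theorem T_T_one (H : HodgeData N g G st m T) : T (T 1) = (m ^ 2 * (gram g).det) • 1 := by
  rw [H.T_one, map_smul, H.T_topMono, smul_smul, ← mul_assoc, sq]

theorem ι_e_mul_T_ι (H : HodgeData N g G st m T) (a : Fin N) (w : W N) :
    ι ℂ (e N a) * T (ι ℂ w) = (m * (gram g *ᵥ w) a) • topMono N := by
  have hb (b : Fin N) : ι ℂ (e N a) * T (ι ℂ (e N b)) = (m * gram g a b) • topMono N := by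
    simpa [mono_of_fin_one] using H.mono_mul_T (fun _ : Fin 1 => a) (fun _ => b)
  simp [ι_eq_sum_smul_ι_e N w, Finset.mul_sum, hb, smul_smul, mulVec, dotProduct,
    ← Finset.sum_smul, Finset.mul_sum, mul_comm, mul_left_comm]

end

section

variable {n : ℕ} {g : W (n + 1) →ₗ[ℂ] W (n + 1) →ₗ[ℂ] ℂ}
  {G : ℕ → (E (n + 1) →ₗ[ℂ] E (n + 1) →ₗ[ℂ] ℂ)} {st : E (n + 1) →ₛₗ[starRingEnd ℂ] E (n + 1)}
  {m : ℂ} {T : E (n + 1) →ₗ[ℂ] E (n + 1)}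

theorem T_ι (H : HodgeData (n + 1) g G st m T) (w : W (n + 1)) :
    T (ι ℂ w) =
      ∑ c : Fin (n + 1), ((-1 : ℂ) ^ (c : ℕ) * (m * (gram g *ᵥ w) c)) • omitMono n c := by
  have hmem : T (ι ℂ w) ∈ degE (n + 1) n := by
    simpa using H.hTdeg 1 _ (by simp [degE])
  refine eq_sum_omitMono_of_ι_e_mul hmem fun a => ?_
  rw [H.ι_e_mul_T_ι, ← mul_assoc, pow_mul_pow_eq_one _ (by norm_num), one_mul]

theorem T_omitMono (H : HodgeData (n + 1) g G st m T) (c : Fin (n + 1)) :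
    T (omitMono n c) = ((-1 : ℂ) ^ (n + c : ℕ) * m) • ι ℂ ((gram g).adjugate c) := by
  have hmem : T (omitMono n c) ∈ degE (n + 1) 1 := by
    simpa using H.hTdeg n (omitMono n c) (mono_mem_degE _ _)
  rw [← map_smul]
  refine eq_ι_of_omitMono_mul hmem fun b => ?_
  have hsign : (-1 : ℂ) ^ (n + b : ℕ) * (-1) ^ (n + c : ℕ) * (-1) ^ (b + c : ℕ) = 1 := by
    rw [← pow_add, ← pow_add]
    exact Even.neg_one_pow ⟨n + b + c, by omega⟩
  rw [omitMono, omitMono, H.mono_mul_T, Pi.smul_apply, adjugate_fin_succ_eq_det_submatrix,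
    smul_eq_mul]
  congr 1
  linear_combination (-(m * ((gram g).submatrix b.succAbove c.succAbove).det)) * hsign

theorem T_T_ι (H : HodgeData (n + 1) g G st m T) (w : W (n + 1)) :
    T (T (ι ℂ w)) = ((-1 : ℂ) ^ n * m ^ 2) • ι ℂ (((gram g)ᵀ.adjugate * gram g) *ᵥ w) := by
  have hsign (c : ℕ) : (-1 : ℂ) ^ c * (-1) ^ (n + c) = (-1) ^ n := by
    rw [pow_add, mul_left_comm, pow_mul_pow_eq_one _ (by norm_num), mul_one]
  simp_rw [H.T_ι, map_sum, map_smul, H.T_omitMono, smul_smul, ← mulVec_mulVec,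
    ← adjugate_transpose, mulVec_transpose, vecMul_eq_sum, map_sum, map_smul, Finset.smul_sum,
    smul_smul]
  refine Finset.sum_congr rfl fun c _ => ?_
  congr 1
  linear_combination (m ^ 2 * (gram g *ᵥ w) c) * hsign c

end

end HodgeData

/-- classical symmetry criterion: `g` is symmetric on `W` iff
`T(T(φ)) = (−1)^{N−1} T(T(1)) φ` for all `φ ∈ Λ¹W` (where `T(T(1)) ∈ Λ⁰W = ℂ`). -/
theorem classical_symmetry_criterion (N : ℕ) (hN : 1 ≤ N)
    (g : W N →ₗ[ℂ] W N →ₗ[ℂ] ℂ) (G : ℕ → (E N →ₗ[ℂ] E N →ₗ[ℂ] ℂ))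
    (st : E N →ₛₗ[starRingEnd ℂ] E N) (m : ℂ) (T : E N →ₗ[ℂ] E N)
    (H : HodgeData N g G st m T) :
    (∀ v w : W N, g v w = g w v) ↔
      (∀ φ ∈ degE N 1, T (T φ) = ((-1 : ℂ)) ^ (N - 1) • (T (T 1) * φ)) := by
  obtain ⟨n, rfl⟩ := Nat.exists_eq_add_of_le' hN
  have hscalar : (-1 : ℂ) ^ n * m ^ 2 ≠ 0 :=
    mul_ne_zero (pow_ne_zero _ (by norm_num)) (pow_ne_zero _ H.m_ne)
  have hcrit (w : W (n + 1)) :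
      T (T (ι ℂ w)) = (-1 : ℂ) ^ n • (T (T 1) * ι ℂ w) ↔
        ((gram g)ᵀ.adjugate * gram g) *ᵥ w = ((gram g).det • 1 : Matrix _ _ ℂ) *ᵥ w := by
    rw [H.T_T_ι, H.T_T_one, smul_one_mul, smul_smul, ← mul_assoc,
      mul_smul ((-1 : ℂ) ^ n * m ^ 2), ← map_smul (ι ℂ) (gram g).det w,
      (smul_right_injective _ hscalar).eq_iff, ι_inj, smul_mulVec, one_mulVec]
  rw [← transpose_gram_eq_iff, ← adjugate_transpose_mul_eq_det_smul_one_iff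
    (isUnit_det_gram H.nondeg), ext_iff_mulVec]
  simp only [degE, pow_one, LinearMap.mem_range, forall_exists_index, forall_apply_eq_imp_iff,
    Nat.add_sub_cancel, hcrit]

end
end
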